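/- Closed form of the q-coherent state expansion: for every real ζ with q(1−q)ζ² < 1 and every real x, the series Σ_{n=0}^∞ (ζ^n/√(n!_{q,α})) · φ_n^α(x;q) converges and equals c_α · √(ω_α(x;q)) · e_{q²}(−q(1−q)ζ²) · E_{q,α}(q^{1/2}(1−q)^{1/2} x ζ), where e_{q²}(z) = Σ_{k=0}^∞ z^k/(q²;q²)_k and E_{q,α}(z) = Σ_{k=0}^∞ q^{k(k−1)/2} z^k/(q;q)_{k,α}. -/

import Mathlib

open scoped BigOperators
open Real Filter

noncomputable section

/-- q-shifted factorial `(a;q)_n`. -/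
def qPoch (a q : ℝ) (n : ℕ) : ℝ := ∏ k ∈ Finset.range n, (1 - a * q ^ k)

/-- infinite q-shifted factorial `(a;q)_∞`. -/
def qPochInf (a q : ℝ) : ℝ := ∏' k : ℕ, (1 - a * q ^ k)

/-- q-number `⟦x⟧_q = (1-q^x)/(1-q)`. -/
def qNumber (q x : ℝ) : ℝ := (1 - q ^ x) / (1 - q)

/-- generalized q-integer `⟦n⟧_{q,α}`: equals `⟦n⟧_q` for even `n` and
`⟦n+2α+1⟧_q` for odd `n` (so `⟦2m+1⟧_{q,α} = ⟦2m+2α+2⟧_q`). -/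
def qNumAlpha (q α : ℝ) (n : ℕ) : ℝ :=
  if n % 2 = 0 then qNumber q n else qNumber q (n + 2 * α + 1)

/-- generalized q-factorial `n!_{q,α}`. -/
def qFactAlpha (q α : ℝ) (n : ℕ) : ℝ := ∏ k ∈ Finset.range n, qNumAlpha q α (k + 1)

/-- generalized q-shifted factorial `(q;q)_{n,α} = (1-q)^n n!_{q,α}`. -/
def qPochAlpha (q α : ℝ) (n : ℕ) : ℝ := (1 - q) ^ n * qFactAlpha q α n

/-- generalized discrete q-Hermite II polynomials `h̃_{n,α}(x;q)`. -/
def hTilde (q α : ℝ) (n : ℕ) (x : ℝ) : ℝ :=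
  qPoch q q n * ∑ k ∈ Finset.range (n / 2 + 1),
    (-1 : ℝ) ^ k * q ^ ((k * (2 * k + 1) : ℤ) - (2 * n * k : ℤ)) * x ^ (n - 2 * k) /
      (qPoch (q ^ 2) (q ^ 2) k * qPochAlpha q α (n - 2 * k))

/-- the weight `ω_α(x;q) = e_{q²}(-q^{-2α-1}x²) = 1/∏_{k≥0}(1+q^{-2α-1}x²q^{2k})`. -/
def omegaAlpha (q α x : ℝ) : ℝ :=
  (∏' k : ℕ, (1 + q ^ (-(2 * α + 1)) * x ^ 2 * q ^ (2 * k)))⁻¹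

/-- normalization constant `c_α`. -/
def cAlpha (q α : ℝ) : ℝ :=
  Real.sqrt (qPochInf (-q ^ (-(2 * α + 1))) (q ^ 2) * qPochInf (-q ^ (2 * α + 3)) (q ^ 2) *
      qPochInf (q ^ (2 * α + 2)) (q ^ 2) /
    (2 * (1 - q) *
      (qPochInf (-q) (q ^ 2) * qPochInf (-q) (q ^ 2) * qPochInf (q ^ 2) (q ^ 2))))

/-- normalization constant `d_{n,α} = c_α q^{n²/2} (q;q)_{n,α}^{1/2} / (q;q)_n`. -/
def dAlpha (q α : ℝ) (n : ℕ) : ℝ :=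
  cAlpha q α * q ^ (((n : ℝ) ^ 2) / 2) * Real.sqrt (qPochAlpha q α n) / qPoch q q n

/-- the (q,α)-deformed Hermite functions `φ_n^α(x;q)`. -/
def phiQ (q α : ℝ) (n : ℕ) (x : ℝ) : ℝ :=
  dAlpha q α n * Real.sqrt (omegaAlpha q α x) * hTilde q α n x

/-- parity indicator `θ(n)`: 1 if `n` is odd, 0 if `n` is even. -/
def theta (n : ℕ) : ℝ := if n % 2 = 1 then 1 else 0

/-- the q-Gamma function `Γ_q(z) = (q;q)_∞ / (q^z;q)_∞ · (1-q)^{1-z}`. -/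
def qGammaF (q z : ℝ) : ℝ := qPochInf q q / qPochInf (q ^ z) q * (1 - q) ^ (1 - z)

/-- Rosenblum generalized factorial `γ_ν(n)`. -/
def gammaGen (ν : ℝ) (n : ℕ) : ℝ :=
  2 ^ n * (Nat.factorial (n / 2) : ℝ) *
    Real.Gamma (ν + (((n + 1) / 2 : ℕ) : ℝ) + 1 / 2) / Real.Gamma (ν + 1 / 2)

/-- generalized Hermite polynomials `H_n^ν(x)`. -/
def HGen (ν : ℝ) (n : ℕ) (x : ℝ) : ℝ :=
  (Nat.factorial n : ℝ) * ∑ k ∈ Finset.range (n / 2 + 1),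
    (-1 : ℝ) ^ k * (2 * x) ^ (n - 2 * k) / ((Nat.factorial k : ℝ) * gammaGen ν (n - 2 * k))

/-- Rosenblum generalized Hermite functions `φ_n^ν(x)`. -/
def phiGen (ν : ℝ) (n : ℕ) (x : ℝ) : ℝ :=
  Real.sqrt (gammaGen ν n / Real.Gamma (ν + 1 / 2)) * Real.exp (-x ^ 2 / 2) *
    HGen ν n x / ((2 : ℝ) ^ ((n : ℝ) / 2) * (Nat.factorial n : ℝ))

/-- symmetric q-number `[x]_s = (s^x - s^{-x})/(s - s^{-1})`. -/
def qNumSym (s x : ℝ) : ℝ := (s ^ x - s ^ (-x)) / (s - s⁻¹)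

/-- Euler q-exponential `e_q(z) = Σ z^k/(q;q)_k`. -/
def eExp (q z : ℝ) : ℝ := ∑' k : ℕ, z ^ k / qPoch q q k

/-- generalized q-exponential `E_{q,α}(z) = Σ q^{k(k-1)/2} z^k/(q;q)_{k,α}`. -/
def bigEAlpha (q α z : ℝ) : ℝ := ∑' k : ℕ, q ^ (k * (k - 1) / 2) * z ^ k / qPochAlpha q α k

/-- generalized q-exponential `e_{q,α}(z) = Σ z^k/(q;q)_{k,α}`. -/
def eExpAlpha (q α z : ℝ) : ℝ := ∑' k : ℕ, z ^ k / qPochAlpha q α k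

/-!
Writing `z = -q(1-q)ζ²` and `w = √q √(1-q) x ζ`, the normalisation `d_{n,α}` cancels against
`√(n!_{q,α})`, and `ζⁿ/√(n!_{q,α}) · φ_n^α(x;q)` becomes `c_α √ω_α(x;q) · Σ_{2k+m=n} a_k b_m` with
`a_k = z^k/(q²;q²)_k` and `b_m = q^{m(m-1)/2} w^m/(q;q)_{m,α}`: the exponents of `q` combine as
`(m+2k)²/2 + k(2k+1) - 2(m+2k)k = k + m(m-1)/2 + m/2`. Both `Σ a_k = e_{q²}(z)` (as `|z| < 1`) and
`Σ b_m = E_{q,α}(w)` (whose ratio of consecutive terms tends to `0`) converge absolutely by the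
ratio test, so the series is their Cauchy product regrouped along `2k + m = n`.
-/

open Finset

theorem summable_norm_of_succ_eq_mul {f r : ℕ → ℝ} {l : ℝ} (hl : |l| < 1)
    (hr : Tendsto r atTop (nhds l)) (hf : ∀ n, f (n + 1) = r n * f n) :
    Summable fun n => ‖f n‖ := by
  have hρ : |l| < (|l| + 1) / 2 := by linarith
  refine summable_of_ratio_norm_eventually_le (r := (|l| + 1) / 2) (by linarith) ?_
  filter_upwards [hr.norm.eventually_lt_const (by rwa [Real.norm_eq_abs])] with n hn
  rw [norm_norm, norm_norm, hf, norm_mul]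
  exact mul_le_mul_of_nonneg_right hn.le (norm_nonneg _)

def prodEquivSigmaHalf : ℕ × ℕ ≃ Σ n : ℕ, Fin (n / 2 + 1) where
  toFun p := ⟨p.2 + 2 * p.1, ⟨p.1, by omega⟩⟩
  invFun s := (s.2, s.1 - 2 * s.2)
  left_inv p := by simp
  right_inv := by
    rintro ⟨n, k⟩
    have hn : n - 2 * (k : ℕ) + 2 * (k : ℕ) = n := by omega
    apply Sigma.ext
    · simpa using hn
    · exact (Fin.heq_ext_iff (by simp only [hn])).mpr rfl

theorem hasSum_sum_range_mul_sub_two_mul {R : Type*} [NormedRing R] [CompleteSpace R]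
    {f g : ℕ → R} (hf : Summable fun k => ‖f k‖) (hg : Summable fun m => ‖g m‖) :
    HasSum (fun n => ∑ k ∈ range (n / 2 + 1), f k * g (n - 2 * k))
      ((∑' k, f k) * ∑' m, g m) := by
  have hprod : HasSum (fun p : ℕ × ℕ => f p.1 * g p.2) ((∑' k, f k) * ∑' m, g m) :=
    hf.of_norm.hasSum.mul hg.of_norm.hasSum (summable_mul_of_summable_norm hf hg)
  have hsigma := prodEquivSigmaHalf.symm.hasSum_iff.mpr hprod
  convert hsigma.sigma fun n => hasSum_fintype _ using 2 with n
  exact (Fin.sum_univ_eq_sum_range (fun k => f k * g (n - 2 * k)) _).symm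

theorem qPoch_self_succ (a : ℝ) (n : ℕ) : qPoch a a (n + 1) = qPoch a a n * (1 - a * a ^ n) :=
  prod_range_succ _ n

theorem qPoch_self_pos {a : ℝ} (ha0 : 0 ≤ a) (ha1 : a < 1) (n : ℕ) : 0 < qPoch a a n :=
  prod_pos fun k _ => by nlinarith [pow_le_one₀ ha0 ha1.le (n := k)]

theorem summable_norm_eExp_term {q z : ℝ} (hq0 : 0 ≤ q) (hq1 : q < 1) (hz : |z| < 1) :
    Summable fun k => ‖z ^ k / qPoch q q k‖ := by
  refine summable_norm_of_succ_eq_mul (r := fun k => z / (1 - q * q ^ k)) hz ?_ fun k => ?_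
  · have : Tendsto (fun k : ℕ => z / (1 - q * q ^ k)) atTop (nhds (z / (1 - q * 0))) :=
      tendsto_const_nhds.div
        (tendsto_const_nhds.sub ((tendsto_pow_atTop_nhds_zero_of_lt_one hq0 hq1).const_mul q))
        (by simp)
    simpa using this
  · have hk : 0 < 1 - q * q ^ k := by nlinarith [pow_le_one₀ hq0 hq1.le (n := k)]
    have := qPoch_self_pos hq0 hq1 k
    rw [qPoch_self_succ, pow_succ]
    field_simp

def alphaIndex (α : ℝ) (n : ℕ) : ℝ := if n % 2 = 0 then n else n + 2 * α + 1

theorem qNumAlpha_eq_qNumber (q α : ℝ) (n : ℕ) :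
    qNumAlpha q α n = qNumber q (alphaIndex α n) := by
  unfold qNumAlpha alphaIndex
  split <;> rfl

theorem natCast_lt_alphaIndex_succ {α : ℝ} (hα : -1 < α) (m : ℕ) :
    (m : ℝ) < alphaIndex α (m + 1) := by
  unfold alphaIndex
  split <;> push_cast <;> linarith

theorem one_sub_mul_qNumber {q : ℝ} (hq : q ≠ 1) (x : ℝ) : (1 - q) * qNumber q x = 1 - q ^ x :=
  mul_div_cancel₀ _ (sub_ne_zero.mpr hq.symm)

theorem qNumber_pos {q x : ℝ} (hq0 : 0 < q) (hq1 : q < 1) (hx : 0 < x) : 0 < qNumber q x :=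
  div_pos (sub_pos.mpr (Real.rpow_lt_one hq0.le hq1 hx)) (sub_pos.mpr hq1)

theorem qFactAlpha_pos {q α : ℝ} (hq0 : 0 < q) (hq1 : q < 1) (hα : -1 < α) (n : ℕ) :
    0 < qFactAlpha q α n :=
  prod_pos fun k _ => qNumAlpha_eq_qNumber q α (k + 1) ▸
    qNumber_pos hq0 hq1 ((Nat.cast_nonneg k).trans_lt (natCast_lt_alphaIndex_succ hα k))

theorem qPochAlpha_pos {q α : ℝ} (hq0 : 0 < q) (hq1 : q < 1) (hα : -1 < α) (n : ℕ) :
    0 < qPochAlpha q α n :=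
  mul_pos (pow_pos (sub_pos.mpr hq1) n) (qFactAlpha_pos hq0 hq1 hα n)

theorem qPochAlpha_succ {q : ℝ} (hq : q ≠ 1) (α : ℝ) (m : ℕ) :
    qPochAlpha q α (m + 1) = qPochAlpha q α m * (1 - q ^ alphaIndex α (m + 1)) := by
  rw [qPochAlpha, qPochAlpha, qFactAlpha, qFactAlpha, prod_range_succ, pow_succ,
    ← one_sub_mul_qNumber hq, ← qNumAlpha_eq_qNumber]
  ring

theorem summable_norm_bigEAlpha_term {q α : ℝ} (hq0 : 0 < q) (hq1 : q < 1) (hα : -1 < α)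
    (w : ℝ) : Summable fun m => ‖q ^ (m * (m - 1) / 2) * w ^ m / qPochAlpha q α m‖ := by
  have hindex : Tendsto (fun m : ℕ => alphaIndex α (m + 1)) atTop atTop :=
    tendsto_atTop_mono (fun m => (natCast_lt_alphaIndex_succ hα m).le)
      tendsto_natCast_atTop_atTop
  have hden : Tendsto (fun m : ℕ => 1 - q ^ alphaIndex α (m + 1)) atTop (nhds (1 - 0)) :=
    tendsto_const_nhds.sub
      ((tendsto_rpow_atTop_of_base_lt_one q (by linarith) hq1).comp hindex)
  refine summable_norm_of_succ_eq_mul (l := 0)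
    (r := fun m => q ^ m * w / (1 - q ^ alphaIndex α (m + 1))) (by simp) ?_ fun m => ?_
  · have : Tendsto (fun m : ℕ => q ^ m * w / (1 - q ^ alphaIndex α (m + 1))) atTop
        (nhds (0 * w / (1 - 0))) :=
      ((tendsto_pow_atTop_nhds_zero_of_lt_one hq0.le hq1).mul_const w).div hden (by simp)
    simpa using this
  · have hm : 0 < 1 - q ^ alphaIndex α (m + 1) := sub_pos.mpr <| Real.rpow_lt_one hq0.le hq1 <|
      (Nat.cast_nonneg m).trans_lt (natCast_lt_alphaIndex_succ hα m)
    have := qPochAlpha_pos hq0 hq1 hα m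
    rw [qPochAlpha_succ hq1.ne, Nat.triangle_succ, pow_add, pow_succ]
    field_simp

theorem sqrt_pow_eq_pow_sqrt {a : ℝ} (ha : 0 ≤ a) (n : ℕ) : √(a ^ n) = √a ^ n := by
  rw [← Real.sq_sqrt ha, ← pow_mul, mul_comm, pow_mul, Real.sqrt_sq (by positivity),
    Real.sq_sqrt ha]

theorem sqrt_qFactAlpha_mul_phiQ {q α : ℝ} (hq0 : 0 < q) (hq1 : q < 1) (hα : -1 < α)
    (ζ x : ℝ) (n : ℕ) :
    ζ ^ n / √(qFactAlpha q α n) * phiQ q α n x =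
      cAlpha q α * √(omegaAlpha q α x) * ∑ k ∈ range (n / 2 + 1),
        ζ ^ n * q ^ ((n : ℝ) ^ 2 / 2) * √(1 - q) ^ n *
          ((-1) ^ k * q ^ ((k * (2 * k + 1) : ℤ) - (2 * n * k : ℤ)) * x ^ (n - 2 * k) /
            (qPoch (q ^ 2) (q ^ 2) k * qPochAlpha q α (n - 2 * k))) := by
  have hF := Real.sqrt_pos.mpr (qFactAlpha_pos hq0 hq1 hα n)
  have hQ := qPoch_self_pos hq0.le hq1 n
  rw [phiQ, dAlpha, hTilde, qPochAlpha, Real.sqrt_mul (pow_nonneg (sub_pos.mpr hq1).le n),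
    sqrt_pow_eq_pow_sqrt (sub_pos.mpr hq1).le, ← mul_sum]
  field_simp

theorem hTilde_summand_scaled_eq {q : ℝ} (hq0 : 0 < q) (hq1 : q < 1) (α ζ x : ℝ) (k m : ℕ) :
    ζ ^ (m + 2 * k) * q ^ (((m + 2 * k : ℕ) : ℝ) ^ 2 / 2) * √(1 - q) ^ (m + 2 * k) *
        ((-1) ^ k * q ^ ((k * (2 * k + 1) : ℤ) - (2 * (m + 2 * k : ℕ) * k : ℤ)) * x ^ m /
          (qPoch (q ^ 2) (q ^ 2) k * qPochAlpha q α m)) =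
      (-(q * (1 - q) * ζ ^ 2)) ^ k / qPoch (q ^ 2) (q ^ 2) k *
        (q ^ (m * (m - 1) / 2) * (√q * √(1 - q) * x * ζ) ^ m / qPochAlpha q α m) := by
  have hexp : q ^ (((m + 2 * k : ℕ) : ℝ) ^ 2 / 2) *
        q ^ ((k * (2 * k + 1) : ℤ) - (2 * (m + 2 * k : ℕ) * k : ℤ)) =
      q ^ k * q ^ (m * (m - 1) / 2) * √q ^ m := by
    rw [← Real.rpow_intCast, ← Real.rpow_natCast q k, ← Real.rpow_natCast q (m * (m - 1) / 2),
      Real.sqrt_eq_rpow, ← Real.rpow_natCast (q ^ (1 / 2 : ℝ)) m, ← Real.rpow_mul hq0.le,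
      ← Real.rpow_add hq0, ← Real.rpow_add hq0, ← Real.rpow_add hq0,
      ← Nat.choose_two_right, Nat.cast_choose_two]
    push_cast
    ring_nf
  have hz : (-(q * (1 - q) * ζ ^ 2)) ^ k = (-1) ^ k * q ^ k * √(1 - q) ^ (2 * k) * ζ ^ (2 * k) := by
    rw [pow_mul, pow_mul, Real.sq_sqrt (sub_pos.mpr hq1).le, neg_pow, mul_pow, mul_pow]
    ring
  rw [div_mul_div_comm, ← mul_div_assoc, hz, mul_pow, mul_pow, mul_pow, pow_add, pow_add]
  congr 1
  linear_combination ((-1) ^ k * ζ ^ m * ζ ^ (2 * k) * √(1 - q) ^ m * √(1 - q) ^ (2 * k) * x ^ m) *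
    hexp

/-- closed form of the q-coherent state expansion. -/
theorem stmt_11 (q α : ℝ) (hq0 : 0 < q) (hq1 : q < 1) (hα : -1 < α)
    (ζ : ℝ) (hζ : q * (1 - q) * ζ ^ 2 < 1) (x : ℝ) :
    HasSum (fun n : ℕ => ζ ^ n / Real.sqrt (qFactAlpha q α n) * phiQ q α n x)
      (cAlpha q α * Real.sqrt (omegaAlpha q α x) * eExp (q ^ 2) (-(q * (1 - q) * ζ ^ 2)) *
        bigEAlpha q α (Real.sqrt q * Real.sqrt (1 - q) * x * ζ)) := by
  have hz : |-(q * (1 - q) * ζ ^ 2)| < 1 := by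
    have := sub_pos.mpr hq1
    rwa [abs_neg, abs_of_nonneg (by positivity)]
  have hcauchy := (hasSum_sum_range_mul_sub_two_mul
    (summable_norm_eExp_term (sq_nonneg q) (by nlinarith) hz)
    (summable_norm_bigEAlpha_term hq0 hq1 hα (√q * √(1 - q) * x * ζ))).mul_left
      (cAlpha q α * √(omegaAlpha q α x))
  rw [← mul_assoc] at hcauchy
  refine hcauchy.congr_fun fun n => ?_
  rw [sqrt_qFactAlpha_mul_phiQ hq0 hq1 hα]
  congr 1
  refine sum_congr rfl fun k hk => ?_
  obtain ⟨m, rfl⟩ : ∃ m, n = m + 2 * k := ⟨n - 2 * k, by grind⟩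
  rw [Nat.add_sub_cancel, hTilde_summand_scaled_eq hq0 hq1]
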